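/- Let G = (V,E) be a finite simple graph without isolated vertices. If every non-pendant edge of G is incident to a pendant edge, then the function γ(F) = α(G[V⟨F⟩]) is supermodular: for all S ⊆ T ⊆ E \ {e} and any edge e, γ(S ∪ {e}) − γ(S) ≤ γ(T ∪ {e}) − γ(T). -/

import Mathlib

/-- `closedVerts G F` is V⟨F⟩: the set of vertices of `G` all of whose incident
edges belong to `F`. -/
def closedVerts {V : Type*} (G : SimpleGraph V) (F : Set (Sym2 V)) : Set V :=
  {v | ∀ e ∈ G.edgeSet, v ∈ e → e ∈ F}

/-- `s` is an independent set of the induced subgraph `G[A]`. -/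
def IsIndepOn {V : Type*} (G : SimpleGraph V) (A : Set V) (s : Finset V) : Prop :=
  ↑s ⊆ A ∧ ∀ u ∈ s, ∀ v ∈ s, ¬ G.Adj u v

/-- `gamma G F = α(G[V⟨F⟩])`, the maximum size of an independent set of the
subgraph of `G` induced on `closedVerts G F`. -/
noncomputable def gamma {V : Type*} [Fintype V] (G : SimpleGraph V) (F : Set (Sym2 V)) : ℕ :=
  sSup {n | ∃ s : Finset V, IsIndepOn G (closedVerts G F) s ∧ s.card = n}

/-!
Adding an edge `e = ab` to `F` can only add `a` and `b` to V⟨F⟩, and they are adjacent, so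
`γ(F ∪ {e}) ≤ γ(F) + 1`; as `γ` is monotone, it suffices to show that if `e` brings a gain
at `S` then it brings one at every `T ⊇ S` avoiding `e`.

If `e` is pendant at `a`, then `a` can always be added to a maximum independent set of
V⟨T⟩. Otherwise the hypothesis gives a pendant neighbour `w` of an endpoint `a`. A maximum
independent set `I` of V⟨S ∪ {e}⟩ that beats γ(S) must then contain `b` and not `a` (else
`a` could be exchanged for `w`), so all other edges at `b` lie in `S`, and `b` has no pendant
neighbour (else `b` could be exchanged for it). Consequently every neighbour `y` of `b` has
a pendant neighbour of its own, and exchanging each such `y` for it turns a maximum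
independent set of V⟨T⟩ into one avoiding the neighbourhood of `b`, to which `b` can be added.
-/

open SimpleGraph

section

variable {V : Type*} {G : SimpleGraph V}

lemma SimpleGraph.eq_of_adj_of_degree_eq_one [Fintype V] [DecidableRel G.Adj] {w u v : V}
    (hw : G.degree w = 1) (hwv : G.Adj w v) (hwu : G.Adj w u) : u = v :=
  (degree_eq_one_iff_existsUnique_adj.mp hw).unique hwu hwv

lemma closedVerts_mono {F F' : Set (Sym2 V)} (h : F ⊆ F') :
    closedVerts G F ⊆ closedVerts G F' :=
  fun _ hv g hg hvg => h (hv g hg hvg)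

lemma mem_of_mem_closedVerts {F : Set (Sym2 V)} {v u : V} (hv : v ∈ closedVerts G F)
    (hvu : G.Adj v u) : s(v, u) ∈ F :=
  hv _ hvu (Sym2.mem_mk_left v u)

lemma mem_closedVerts_of_mem_insert {F : Set (Sym2 V)} {e : Sym2 V} {v : V}
    (hv : v ∈ closedVerts G (insert e F)) (hve : v ∉ e) : v ∈ closedVerts G F := by
  intro g hg hvg
  obtain rfl | h := hv g hg hvg
  · exact absurd hvg hve
  · exact h

lemma notMem_closedVerts_of_mem {F : Set (Sym2 V)} {e : Sym2 V} (he : e ∈ G.edgeSet)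
    (heF : e ∉ F) {v : V} (hv : v ∈ e) : v ∉ closedVerts G F :=
  fun h => heF (h e he hv)

lemma mem_closedVerts_of_degree_eq_one [Fintype V] [DecidableRel G.Adj] {F : Set (Sym2 V)}
    {w v : V} (hw : G.degree w = 1) (hwv : G.Adj w v) (hF : s(w, v) ∈ F) :
    w ∈ closedVerts G F := by
  intro g hg hwg
  obtain ⟨u, rfl⟩ := Sym2.mem_iff_exists.mp hwg
  rwa [eq_of_adj_of_degree_eq_one hw hwv (G.mem_edgeSet.mp hg)]

section IsIndepOn

variable {A : Set V} {I : Finset V}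

lemma IsIndepOn.mono {B : Set V} (hI : IsIndepOn G A I) (hAB : A ⊆ B) : IsIndepOn G B I :=
  ⟨hI.1.trans hAB, hI.2⟩

lemma IsIndepOn.subset {J : Finset V} (hI : IsIndepOn G A I) (hJI : J ⊆ I) :
    IsIndepOn G A J :=
  ⟨(Finset.coe_subset.mpr hJI).trans hI.1, fun u hu v hv => hI.2 u (hJI hu) v (hJI hv)⟩

lemma IsIndepOn.insert_of_forall_not_adj [DecidableEq V] {x : V} (hI : IsIndepOn G A I)
    (hx : x ∈ A) (hxI : ∀ y ∈ I, ¬ G.Adj x y) : IsIndepOn G A (insert x I) := by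
  refine ⟨by simpa [Set.insert_subset_iff] using ⟨hx, hI.1⟩, ?_⟩
  intro u hu v hv
  rw [Finset.mem_insert] at hu hv
  rcases hu with rfl | hu <;> rcases hv with rfl | hv
  · exact G.loopless.irrefl _
  · exact hxI _ hv
  · exact fun h => hxI _ hu h.symm
  · exact hI.2 _ hu _ hv

lemma IsIndepOn.exchange_pendant [DecidableEq V] [Fintype V] [DecidableRel G.Adj] {x w : V}
    (hI : IsIndepOn G A (I.erase x)) (hx : x ∈ I) (hwI : w ∉ I) (hw : G.degree w = 1)
    (hwx : G.Adj w x) (hwA : w ∈ A) :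
    IsIndepOn G A (insert w (I.erase x)) ∧ (insert w (I.erase x)).card = I.card := by
  refine ⟨hI.insert_of_forall_not_adj hwA fun y hy hwy => ?_, ?_⟩
  · exact Finset.ne_of_mem_erase hy (eq_of_adj_of_degree_eq_one hw hwx hwy)
  · rw [Finset.card_insert_of_notMem (fun h => hwI (Finset.mem_of_mem_erase h)),
      Finset.card_erase_add_one hx]

lemma IsIndepOn.erase_of_insert [DecidableEq V] {F : Set (Sym2 V)} {e : Sym2 V} {x : V}
    (hI : IsIndepOn G (closedVerts G (insert e F)) I) (hx : ∀ v ∈ I, v ∈ e → v = x) :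
    IsIndepOn G (closedVerts G F) (I.erase x) := by
  refine ⟨fun v hv => ?_, (hI.subset (Finset.erase_subset x I)).2⟩
  obtain ⟨hvx, hvI⟩ := Finset.mem_erase.mp hv
  exact mem_closedVerts_of_mem_insert (hI.1 hvI) fun hve => hvx (hx v hvI hve)

end IsIndepOn

section Gamma

variable [Fintype V]

lemma bddAbove_indepCards (F : Set (Sym2 V)) :
    BddAbove {n | ∃ s : Finset V, IsIndepOn G (closedVerts G F) s ∧ s.card = n} :=
  ⟨Fintype.card V, by rintro n ⟨s, _, rfl⟩; exact s.card_le_univ⟩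

lemma IsIndepOn.card_le_gamma {F : Set (Sym2 V)} {s : Finset V}
    (h : IsIndepOn G (closedVerts G F) s) : s.card ≤ gamma G F :=
  le_csSup (bddAbove_indepCards F) ⟨s, h, rfl⟩

lemma exists_isIndepOn_card_eq_gamma (G : SimpleGraph V) (F : Set (Sym2 V)) :
    ∃ s : Finset V, IsIndepOn G (closedVerts G F) s ∧ s.card = gamma G F :=
  Nat.sSup_mem (s := {n | ∃ s : Finset V, IsIndepOn G (closedVerts G F) s ∧ s.card = n})
    ⟨0, ∅, ⟨by simp, by simp⟩, rfl⟩ (bddAbove_indepCards F)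

lemma gamma_mono {F F' : Set (Sym2 V)} (h : F ⊆ F') : gamma G F ≤ gamma G F' := by
  obtain ⟨s, hs, hcard⟩ := exists_isIndepOn_card_eq_gamma G F
  exact hcard ▸ (hs.mono (closedVerts_mono h)).card_le_gamma

lemma gamma_lt_of_isIndepOn_insert [DecidableEq V] {F F' : Set (Sym2 V)} {I : Finset V}
    {x : V} (hI : IsIndepOn G (closedVerts G F') (insert x I)) (hxI : x ∉ I)
    (hcard : I.card = gamma G F) : gamma G F < gamma G F' := by
  have := hI.card_le_gamma
  rw [Finset.card_insert_of_notMem hxI] at this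
  omega

lemma gamma_insert_le {e : Sym2 V} (he : e ∈ G.edgeSet) (F : Set (Sym2 V)) :
    gamma G (insert e F) ≤ gamma G F + 1 := by
  classical
  induction e using Sym2.ind with | _ a b => ?_
  obtain ⟨I, hI, hcard⟩ := exists_isIndepOn_card_eq_gamma G (insert s(a, b) F)
  have hab : ¬ (a ∈ I ∧ b ∈ I) := fun h => hI.2 a h.1 b h.2 he
  obtain ⟨x, hx⟩ : ∃ x, ∀ v ∈ I, v ∈ s(a, b) → v = x := by
    by_cases ha : a ∈ I
    · exact ⟨a, by grind⟩
    · exact ⟨b, by grind⟩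
  have := (hI.erase_of_insert hx).card_le_gamma
  have := Finset.pred_card_le_card_erase (s := I) (a := x)
  omega

end Gamma

section Supermodularity

variable [Fintype V] [DecidableRel G.Adj]

lemma gamma_lt_gamma_insert_of_degree_eq_one {e : Sym2 V} (he : e ∈ G.edgeSet) {a : V}
    (ha : a ∈ e) (hda : G.degree a = 1) {T : Set (Sym2 V)} (heT : e ∉ T) :
    gamma G T < gamma G (insert e T) := by
  classical
  obtain ⟨b, rfl⟩ := Sym2.mem_iff_exists.mp ha
  have hab : G.Adj a b := he
  obtain ⟨I, hI, hcard⟩ := exists_isIndepOn_card_eq_gamma G T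
  have hbI : b ∉ I := fun h => notMem_closedVerts_of_mem he heT (Sym2.mem_mk_right a b) (hI.1 h)
  refine gamma_lt_of_isIndepOn_insert ?_ (fun h => notMem_closedVerts_of_mem he heT ha (hI.1 h))
    hcard
  refine (hI.mono (closedVerts_mono (Set.subset_insert _ _))).insert_of_forall_not_adj ?_ ?_
  · exact mem_closedVerts_of_degree_eq_one hda hab (Set.mem_insert _ _)
  · exact fun y hy hay => hbI (eq_of_adj_of_degree_eq_one hda hab hay ▸ hy)

lemma mem_closedVerts_of_gamma_lt_gamma_insert {a b w : V} (hab : G.Adj a b) (haw : G.Adj a w)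
    (hw : G.degree w = 1) (hna : G.degree a ≠ 1) (hnb : G.degree b ≠ 1) {S : Set (Sym2 V)}
    (hgain : gamma G S < gamma G (insert s(a, b) S)) :
    b ∈ closedVerts G (insert s(a, b) S) ∧ ∀ u, G.Adj b u → G.degree u ≠ 1 := by
  classical
  obtain ⟨I, hI, hcard⟩ := exists_isIndepOn_card_eq_gamma G (insert s(a, b) S)
  have hsmall : ∀ J : Finset V, IsIndepOn G (closedVerts G S) J → J.card < I.card :=
    fun J hJ => hcard ▸ hJ.card_le_gamma.trans_lt hgain
  have hexchange : ∀ x ∈ I, ∀ u, G.Adj x u → G.degree u = 1 → s(x, u) ≠ s(a, b) →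
      IsIndepOn G (closedVerts G S) (I.erase x) → False := by
    intro x hx u hxu hu hne hJ
    have huS : u ∈ closedVerts G S := by
      refine mem_closedVerts_of_degree_eq_one hu hxu.symm ?_
      rw [Sym2.eq_swap]
      exact (mem_of_mem_closedVerts (hI.1 hx) hxu).resolve_left hne
    have huI : u ∉ I := fun h => hI.2 x hx u h hxu
    obtain ⟨hJ', hcard'⟩ := hJ.exchange_pendant hx huI hu hxu.symm huS
    exact (hsmall _ hJ').ne hcard'
  have haI : a ∉ I := by
    intro haI
    have hbI : b ∉ I := fun hbI => hI.2 a haI b hbI hab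
    refine hexchange a haI w haw hw (fun h => hnb ?_) (hI.erase_of_insert ?_)
    · rcases Sym2.eq_iff.mp h with ⟨-, rfl⟩ | ⟨rfl, -⟩
      · exact hw
      · exact absurd rfl (G.ne_of_adj hab)
    · intro v hv hve
      rcases Sym2.mem_iff.mp hve with rfl | rfl
      · rfl
      · exact absurd hv hbI
  have hJ : IsIndepOn G (closedVerts G S) (I.erase b) := by
    refine hI.erase_of_insert fun v hv hve => ?_
    rcases Sym2.mem_iff.mp hve with rfl | rfl
    · exact absurd hv haI
    · rfl
  have hbI : b ∈ I := by
    by_contra hbI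
    exact (hsmall _ hJ).ne (by rw [Finset.erase_eq_of_notMem hbI])
  refine ⟨hI.1 hbI, fun u hbu hu => hexchange b hbI u hbu hu (fun h => ?_) hJ⟩
  rcases Sym2.eq_iff.mp h with ⟨rfl, -⟩ | ⟨-, rfl⟩
  · exact G.loopless.irrefl _ hab
  · exact hna hu

lemma exists_isIndepOn_card_eq_gamma_forall_not_adj {b : V}
    (hpend : ∀ y, G.Adj b y → ∃ z, G.Adj y z ∧ G.degree z = 1)
    (hnb : ∀ u, G.Adj b u → G.degree u ≠ 1) (F : Set (Sym2 V)) :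
    ∃ I : Finset V, IsIndepOn G (closedVerts G F) I ∧ I.card = gamma G F ∧
      ∀ y ∈ I, ¬ G.Adj b y := by
  classical
  suffices key : ∀ I : Finset V, IsIndepOn G (closedVerts G F) I →
      ∃ J : Finset V, IsIndepOn G (closedVerts G F) J ∧ J.card = I.card ∧
        ∀ y ∈ J, ¬ G.Adj b y by
    obtain ⟨I, hI, hcard⟩ := exists_isIndepOn_card_eq_gamma G F
    obtain ⟨J, hJ, hJcard, hJb⟩ := key I hI
    exact ⟨J, hJ, hJcard.trans hcard, hJb⟩
  intro I hI
  induction hn : (I.filter (G.Adj b)).card using Nat.strong_induction_on generalizing I with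
  | _ n ih =>
    rcases (I.filter (G.Adj b)).eq_empty_or_nonempty with hIb | ⟨y, hy⟩
    · exact ⟨I, hI, rfl, Finset.filter_eq_empty_iff.mp hIb⟩
    obtain ⟨hy, hby⟩ := Finset.mem_filter.mp hy
    obtain ⟨z, hyz, hz⟩ := hpend y hby
    have hzF : z ∈ closedVerts G F :=
      mem_closedVerts_of_degree_eq_one hz hyz.symm
        (Sym2.eq_swap ▸ mem_of_mem_closedVerts (hI.1 hy) hyz)
    have hzI : z ∉ I := fun h => hI.2 y hy z h hyz
    obtain ⟨hI', hcard'⟩ :=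
      (hI.subset (Finset.erase_subset y I)).exchange_pendant hy hzI hz hyz.symm hzF
    have hfilter : (insert z (I.erase y)).filter (G.Adj b) = (I.filter (G.Adj b)).erase y := by
      rw [Finset.filter_insert, if_neg fun hbz => hnb z hbz hz, Finset.filter_erase]
    have hlt : ((I.filter (G.Adj b)).erase y).card < n :=
      hn ▸ Finset.card_erase_lt_of_mem (Finset.mem_filter.mpr ⟨hy, hby⟩)
    obtain ⟨J, hJ, hJcard, hJb⟩ := ih _ hlt _ hI' (by rw [hfilter])
    exact ⟨J, hJ, hJcard.trans hcard', hJb⟩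

lemma gamma_lt_of_mem_closedVerts {F F' : Set (Sym2 V)} (hFF' : F ⊆ F') {b : V}
    (hbF' : b ∈ closedVerts G F') (hbF : b ∉ closedVerts G F)
    (hpend : ∀ y, G.Adj b y → ∃ z, G.Adj y z ∧ G.degree z = 1)
    (hnb : ∀ u, G.Adj b u → G.degree u ≠ 1) : gamma G F < gamma G F' := by
  classical
  obtain ⟨I, hI, hcard, hIb⟩ := exists_isIndepOn_card_eq_gamma_forall_not_adj hpend hnb F
  exact gamma_lt_of_isIndepOn_insert
    ((hI.mono (closedVerts_mono hFF')).insert_of_forall_not_adj hbF' hIb)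
    (fun h => hbF (hI.1 h)) hcard

lemma exists_adj_degree_eq_one_of_mem
    (hcond : ∀ e ∈ G.edgeSet, (¬ ∃ v ∈ e, G.degree v = 1) →
      ∃ f ∈ G.edgeSet, (∃ v ∈ f, G.degree v = 1) ∧ ∃ u : V, u ∈ e ∧ u ∈ f)
    {e : Sym2 V} (he : e ∈ G.edgeSet) (hnp : ∀ v ∈ e, G.degree v ≠ 1) :
    ∃ u ∈ e, ∃ w, G.Adj u w ∧ G.degree w = 1 := by
  obtain ⟨f, hf, ⟨w, hwf, hw⟩, u, hue, huf⟩ :=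
    hcond e he fun ⟨v, hv, hdv⟩ => hnp v hv hdv
  have huw : u ≠ w := by
    rintro rfl
    exact hnp u hue hw
  exact ⟨u, hue, w, G.adj_iff_exists_edge.mpr ⟨huw, f, hf, huf, hwf⟩, hw⟩

lemma gamma_lt_gamma_insert_of_subset
    (hcover : ∀ e ∈ G.edgeSet, (∀ v ∈ e, G.degree v ≠ 1) →
      ∃ u ∈ e, ∃ w, G.Adj u w ∧ G.degree w = 1)
    {e : Sym2 V} (he : e ∈ G.edgeSet) {S T : Set (Sym2 V)} (hST : S ⊆ T) (heT : e ∉ T)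
    (hgain : gamma G S < gamma G (insert e S)) : gamma G T < gamma G (insert e T) := by
  by_cases hp : ∃ v ∈ e, G.degree v = 1
  · obtain ⟨a, ha, hda⟩ := hp
    exact gamma_lt_gamma_insert_of_degree_eq_one he ha hda heT
  have hnp : ∀ v ∈ e, G.degree v ≠ 1 := fun v hv hdv => hp ⟨v, hv, hdv⟩
  obtain ⟨a, ha, w, haw, hw⟩ := hcover e he hnp
  obtain ⟨b, rfl⟩ := Sym2.mem_iff_exists.mp ha
  have hnb : G.degree b ≠ 1 := hnp b (Sym2.mem_mk_right a b)
  obtain ⟨hbS, hbpend⟩ :=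
    mem_closedVerts_of_gamma_lt_gamma_insert he haw hw (hnp a ha) hnb hgain
  have hpend : ∀ y, G.Adj b y → ∃ z, G.Adj y z ∧ G.degree z = 1 := by
    intro y hby
    obtain ⟨u, hu, z, huz, hz⟩ := hcover _ hby (by
      intro v hv
      rcases Sym2.mem_iff.mp hv with rfl | rfl
      exacts [hnb, hbpend _ hby])
    rcases Sym2.mem_iff.mp hu with rfl | rfl
    · exact absurd hz (hbpend z huz)
    · exact ⟨z, huz, hz⟩
  exact gamma_lt_of_mem_closedVerts (Set.subset_insert _ _)
    (closedVerts_mono (Set.insert_subset_insert hST) hbS)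
    (notMem_closedVerts_of_mem he heT (Sym2.mem_mk_right a b)) hpend hbpend

end Supermodularity

end

theorem stmt6_general {V : Type*} [Fintype V] (G : SimpleGraph V) [DecidableRel G.Adj]
    (hcond : ∀ e ∈ G.edgeSet, (¬ ∃ v ∈ e, G.degree v = 1) →
      ∃ f ∈ G.edgeSet, (∃ v ∈ f, G.degree v = 1) ∧ ∃ u : V, u ∈ e ∧ u ∈ f) :
    ∀ e ∈ G.edgeSet, ∀ S T : Set (Sym2 V), S ⊆ T → T ⊆ G.edgeSet \ {e} →
      gamma G (insert e S) + gamma G T ≤ gamma G (insert e T) + gamma G S := by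
  intro e he S T hST hT
  have hle := gamma_insert_le he S
  have hmono := gamma_mono (G := G) (Set.subset_insert e T)
  by_cases hgain : gamma G S < gamma G (insert e S)
  · have := gamma_lt_gamma_insert_of_subset
      (fun f hf hnp => exists_adj_degree_eq_one_of_mem hcond hf hnp) he hST
      (fun h => (hT h).2 rfl) hgain
    omega
  · omega

theorem stmt6 {V : Type*} [Fintype V] (G : SimpleGraph V) [DecidableRel G.Adj]
    (hiso : ∀ v : V, ∃ u, G.Adj v u)
    (hcond : ∀ e ∈ G.edgeSet, (¬ ∃ v ∈ e, G.degree v = 1) →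
      ∃ f ∈ G.edgeSet, (∃ v ∈ f, G.degree v = 1) ∧ ∃ u : V, u ∈ e ∧ u ∈ f) :
    ∀ e ∈ G.edgeSet, ∀ S T : Set (Sym2 V), S ⊆ T → T ⊆ G.edgeSet \ {e} →
      gamma G (insert e S) + gamma G T ≤ gamma G (insert e T) + gamma G S :=
  stmt6_general G hcond
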